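/- arXiv:1312.6839 — 7 statements merged into one kernel-verified Lean document; each statement's English description precedes it below -/
import Mathlib

section
/- For every non-negative integer k, \sum_{i=0}^{k} \sum_{j=0}^{k} (-1)^{i+j} \binom{k}{i}\binom{k}{j} (i-j)^{2k} = (-1)^k (2k)!. -/
/-!
Expanding `(i - j) ^ (2k)` binomially factors the double sum as
`∑ m, ± C(2k, m) A m * A (2k - m)`, where `A m = ∑ i, (-1) ^ i C(k, i) i ^ m` is, up to sign,
the `k`-th forward difference of `x ↦ x ^ m` at `0`. Hence `A m = 0` for `m < k` and
`A k = (-1) ^ k k!`, so only `m = k` survives, and `C(2k, k) (k!) ^ 2 = (2k)!`.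
-/

open Finset fwdDiff
open scoped Nat

section
variable {R : Type*} [CommRing R]

theorem sum_neg_one_pow_mul_choose_mul_pow_eq_fwdDiff_iter (k m : ℕ) :
    ∑ i ∈ range (k + 1), (-1 : R) ^ i * k.choose i * (i : R) ^ m =
      (-1) ^ k * (Δ_[1])^[k] (fun r : R ↦ r ^ m) 0 := by
  rw [fwdDiff_iter_eq_sum_shift, mul_sum]
  refine sum_congr rfl fun i hi ↦ ?_
  have hik : i ≤ k := Nat.lt_succ_iff.mp (mem_range.mp hi)
  have hsign : (-1 : R) ^ k * (-1) ^ (k - i) = (-1) ^ i := by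
    rw [← pow_add, show k + (k - i) = i + 2 * (k - i) by omega, pow_add, pow_mul]
    simp
  simp only [zero_add, nsmul_eq_mul, mul_one, zsmul_eq_mul]
  push_cast
  rw [← hsign]
  ring

theorem sum_neg_one_pow_mul_choose_mul_pow_of_lt {k m : ℕ} (h : m < k) :
    ∑ i ∈ range (k + 1), (-1 : R) ^ i * k.choose i * (i : R) ^ m = 0 := by
  rw [sum_neg_one_pow_mul_choose_mul_pow_eq_fwdDiff_iter, fwdDiff_iter_pow_eq_zero_of_lt h,
    Pi.zero_apply, mul_zero]

theorem sum_neg_one_pow_mul_choose_mul_pow_self (k : ℕ) :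
    ∑ i ∈ range (k + 1), (-1 : R) ^ i * k.choose i * (i : R) ^ k = (-1) ^ k * k ! := by
  rw [sum_neg_one_pow_mul_choose_mul_pow_eq_fwdDiff_iter, fwdDiff_iter_eq_factorial,
    Pi.natCast_apply]

theorem sum_sum_mul_mul_sub_pow {ι : Type*} (s : Finset ι) (a x : ι → R) (n : ℕ) :
    ∑ i ∈ s, ∑ j ∈ s, a i * a j * (x i - x j) ^ n =
      ∑ m ∈ range (n + 1), (-1) ^ (m + n) * n.choose m *
        (∑ i ∈ s, a i * x i ^ m) * ∑ j ∈ s, a j * x j ^ (n - m) := by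
  calc ∑ i ∈ s, ∑ j ∈ s, a i * a j * (x i - x j) ^ n
      = ∑ i ∈ s, ∑ j ∈ s, ∑ m ∈ range (n + 1),
          (-1) ^ (m + n) * n.choose m * (a i * x i ^ m) * (a j * x j ^ (n - m)) := by
        refine sum_congr rfl fun i _ ↦ sum_congr rfl fun j _ ↦ ?_
        rw [sub_pow, mul_sum]
        exact sum_congr rfl fun m _ ↦ by ring
    _ = ∑ m ∈ range (n + 1), ∑ i ∈ s, ∑ j ∈ s,
          (-1) ^ (m + n) * n.choose m * (a i * x i ^ m) * (a j * x j ^ (n - m)) :=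
        (sum_congr rfl fun i _ ↦ sum_comm).trans sum_comm
    _ = _ := by
        refine sum_congr rfl fun m _ ↦ ?_
        rw [mul_assoc, sum_mul_sum, mul_sum]
        simp only [mul_sum, mul_assoc]

end

theorem S_eq_at_2k (k : ℕ) :
    (∑ i ∈ Finset.range (k+1), ∑ j ∈ Finset.range (k+1),
      (-1 : ℤ)^(i+j) * (k.choose i) * (k.choose j) * ((i : ℤ) - j)^(2*k)) =
    (-1 : ℤ)^k * (Nat.factorial (2*k)) := by
  have hsplit : ∀ i j : ℕ, (-1 : ℤ) ^ (i + j) * k.choose i * k.choose j =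
      ((-1) ^ i * k.choose i) * ((-1) ^ j * k.choose j) := fun i j ↦ by ring
  simp_rw [hsplit, sum_sum_mul_mul_sub_pow]
  rw [sum_eq_single k]
  · rw [show 2 * k - k = k by omega, sum_neg_one_pow_mul_choose_mul_pow_self]
    have hfac : (2 * k).choose k * k ! * k ! = (2 * k)! := by
      simpa [two_mul] using Nat.choose_mul_factorial_mul_factorial (Nat.le_add_left k k)
    have hsign : (-1 : ℤ) ^ (k + 2 * k) * (-1) ^ k * (-1) ^ k = (-1) ^ k := by
      rw [← pow_add, ← pow_add, show k + 2 * k + k + k = k + 2 * (2 * k) by ring, pow_add,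
        pow_mul, neg_one_sq, one_pow, mul_one]
    rw [← hfac]
    push_cast
    linear_combination ((2 * k).choose k * k ! * k ! : ℤ) * hsign
  · intro m hm hmk
    rcases Nat.lt_or_gt_of_ne hmk with hlt | hgt
    · rw [sum_neg_one_pow_mul_choose_mul_pow_of_lt hlt, mul_zero, zero_mul]
    · have : 2 * k - m < k := by have := mem_range.mp hm; omega
      rw [sum_neg_one_pow_mul_choose_mul_pow_of_lt this, mul_zero]
  · exact fun hk ↦ absurd (mem_range.mpr (by omega)) hk
end

section
/- For every non-negative integer k, \sum_{i=0}^{k} \sum_{j=0}^{k} (-1)^{i+j} \binom{k}{i}\binom{k}{j} (i-j)^{2k+2} = (-1)^k (2k)! \cdot \frac{k(k+1)(2k+1)}{6}. -/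
/-!
Write `A k a = ∑ᵢ (-1)ⁱ C(k,i) iᵃ`; this equals `(-1)ᵏ k! S(a,k)` with `S` the Stirling numbers
of the second kind. Expanding `(i - j)^(2k+2)` binomially turns the double sum into
`∑ₘ (-1)ᵐ C(2k+2,m) A k m · A k (2k+2-m)`. As `S(a,k) = 0` for `a < k`, only `m = k, k+1, k+2`
survive, and `S(k,k) = 1`, `S(k+1,k) = C(k+1,2)`, `24 S(k+2,k) = k(k+1)(k+2)(3k+1)` evaluate them.
-/

open Finset
open scoped Nat

section
variable {R : Type*} [CommRing R]

/-- `(-1)ᵏ` times the `k`-th forward difference of `f` at `0`. -/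
def alternatingChooseSum (k : ℕ) (f : ℕ → R) : R :=
  ∑ i ∈ range (k + 1), (-1) ^ i * k.choose i * f i

theorem alternatingChooseSum_succ (k : ℕ) (f : ℕ → R) :
    alternatingChooseSum (k + 1) f =
      alternatingChooseSum k f - alternatingChooseSum k (fun i ↦ f (i + 1)) := by
  have hk : alternatingChooseSum k f = ∑ i ∈ range (k + 2), (-1) ^ i * k.choose i * f i := by
    simp [alternatingChooseSum, sum_range_succ _ (k + 1)]
  rw [hk, alternatingChooseSum, alternatingChooseSum, sum_range_succ', sum_range_succ' _ (k + 1)]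
  simp only [Nat.choose_succ_succ, Nat.succ_eq_add_one, Nat.choose_zero_right, Nat.cast_add,
    pow_succ, mul_neg_one, neg_mul, add_mul, mul_add, sum_add_distrib, sum_neg_distrib]
  ring

theorem alternatingChooseSum_succ_mul (k : ℕ) (g : ℕ → R) :
    alternatingChooseSum (k + 1) (fun i ↦ i * g i) =
      -(k + 1) * alternatingChooseSum k (fun i ↦ g (i + 1)) := by
  simp only [alternatingChooseSum, mul_sum]
  rw [sum_range_succ']
  simp only [Nat.cast_zero, zero_mul, mul_zero, add_zero]
  refine sum_congr rfl fun i _ ↦ ?_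
  have h := congrArg (Nat.cast : ℕ → R) (Nat.add_one_mul_choose_eq k i)
  push_cast at h ⊢
  linear_combination ((-1 : R) ^ i * g (i + 1)) * h

theorem alternatingChooseSum_pow (k a : ℕ) :
    alternatingChooseSum k (fun i ↦ (i : R) ^ a) = (-1) ^ k * k ! * Nat.stirlingSecond a k := by
  induction a generalizing k with
  | zero =>
    cases k with
    | zero => simp [alternatingChooseSum]
    | succ k => simp [alternatingChooseSum_succ]
  | succ a ih =>
    cases k with
    | zero => simp [alternatingChooseSum]
    | succ k =>
      have hshift := alternatingChooseSum_succ k (fun i ↦ (i : R) ^ a)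
      have habsorb := alternatingChooseSum_succ_mul k (fun i ↦ (i : R) ^ a)
      rw [ih, ih] at hshift
      simp only [pow_succ']
      rw [habsorb, Nat.stirlingSecond_succ_succ]
      push_cast [Nat.factorial_succ] at hshift ⊢
      linear_combination (-(k + 1 : R)) * hshift

theorem alternatingChooseSum_pow_mul_alternatingChooseSum_pow (k a b : ℕ) :
    alternatingChooseSum k (fun i ↦ (i : R) ^ a) * alternatingChooseSum k (fun i ↦ (i : R) ^ b) =
      (k ! : R) ^ 2 * Nat.stirlingSecond a k * Nat.stirlingSecond b k := by
  have hsign : ((-1 : R) ^ k) ^ 2 = 1 := by rw [← pow_mul, pow_mul', neg_one_sq, one_pow]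
  rw [alternatingChooseSum_pow, alternatingChooseSum_pow]
  linear_combination ((k ! : R) ^ 2 * Nat.stirlingSecond a k * Nat.stirlingSecond b k) * hsign

theorem sum_sum_neg_one_pow_mul_choose_mul_choose_mul_sub_pow (k n : ℕ) :
    ∑ i ∈ range (k + 1), ∑ j ∈ range (k + 1),
        (-1 : R) ^ (i + j) * k.choose i * k.choose j * ((i : R) - j) ^ n =
      (-1) ^ n * ∑ m ∈ range (n + 1), (-1) ^ m * n.choose m *
        (alternatingChooseSum k (fun i ↦ (i : R) ^ m) *
          alternatingChooseSum k (fun j ↦ (j : R) ^ (n - m))) := by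
  simp only [alternatingChooseSum, sub_pow, mul_sum, sum_mul]
  conv_rhs => rw [sum_comm]; enter [2, j]; rw [sum_comm]
  rw [sum_comm]
  refine sum_congr rfl fun i _ ↦ sum_congr rfl fun j _ ↦ sum_congr rfl fun m _ ↦ ?_
  ring

theorem sum_range_mul_mul_sub_of_eq_zero_of_lt (k : ℕ) (f g : ℕ → R) (hf : ∀ m < k, f m = 0) :
    ∑ m ∈ range (2 * k + 3), g m * (f m * f (2 * k + 2 - m)) =
      g k * (f k * f (k + 2)) + g (k + 1) * (f (k + 1) * f (k + 1)) +
        g (k + 2) * (f (k + 2) * f k) := by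
  have hsub : ({k, k + 1, k + 2} : Finset ℕ) ⊆ range (2 * k + 3) := by
    intro m hm
    simp only [mem_insert, mem_singleton] at hm
    rw [mem_range]
    omega
  rw [← sum_subset hsub fun m hm hm' ↦ ?_]
  · rw [sum_insert (by simp), sum_insert (by simp), sum_singleton, add_assoc,
      show 2 * k + 2 - k = k + 2 by omega, show 2 * k + 2 - (k + 1) = k + 1 by omega,
      show 2 * k + 2 - (k + 2) = k by omega]
  · simp only [mem_insert, mem_singleton, not_or] at hm'
    rw [mem_range] at hm
    rcases lt_or_ge m k with h | h
    · rw [hf m h, zero_mul, mul_zero]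
    · rw [hf (2 * k + 2 - m) (by omega), mul_zero, mul_zero]

end

theorem Nat.stirlingSecond_add_two_self_left (n : ℕ) :
    24 * Nat.stirlingSecond (n + 2) n = n * (n + 1) * (n + 2) * (3 * n + 1) := by
  induction n with
  | zero => rfl
  | succ n ih =>
    rw [Nat.stirlingSecond_succ_succ, Nat.stirlingSecond_succ_self_left]
    have hchoose : (n + 1 + 1).choose 2 * 2 = (n + 2) * (n + 1) := by
      rw [← Nat.add_one_mul_choose_eq, Nat.choose_one_right]
    linear_combination ih + 12 * (n + 1) * hchoose

theorem six_dvd_mul_add_one_mul_two_mul_add_one (n : ℕ) : 6 ∣ n * (n + 1) * (2 * n + 1) := by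
  induction n with
  | zero => simp
  | succ n ih =>
    obtain ⟨c, hc⟩ := ih
    exact ⟨c + (n + 1) ^ 2, by linear_combination hc⟩

theorem factorial_sq_mul_stirlingSecond_combination (k : ℕ) :
    (k ! : ℤ) ^ 2 * (2 * (2 * k + 2).choose k * Nat.stirlingSecond (k + 2) k
        - (2 * k + 2).choose (k + 1) * (k + 1).choose 2 ^ 2) =
      (2 * k)! * ((k * (k + 1) * (2 * k + 1) / 6 : ℕ) : ℤ) := by
  have hX := Nat.choose_mul_factorial_mul_factorial (show k ≤ 2 * k + 2 by omega)
  have hY := Nat.choose_mul_factorial_mul_factorial (show k + 1 ≤ 2 * k + 2 by omega)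
  rw [show 2 * k + 2 - k = k + 2 by omega] at hX
  rw [show 2 * k + 2 - (k + 1) = k + 1 by omega] at hY
  have h2k : (2 * k + 2)! = (2 * k + 2) * ((2 * k + 1) * (2 * k)!) := rfl
  simp only [h2k, Nat.factorial_succ] at hX hY
  have hS := Nat.stirlingSecond_add_two_self_left k
  have hC : (k + 1).choose 2 * 2 = (k + 1) * k := by
    rw [← Nat.add_one_mul_choose_eq, Nat.choose_one_right]
  obtain ⟨c, hc⟩ := six_dvd_mul_add_one_mul_two_mul_add_one k
  rw [hc, Nat.mul_div_cancel_left c (by norm_num)]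
  refine mul_left_cancel₀ (show (24 : ℤ) ≠ 0 by norm_num) ?_
  zify at hX hY hS hC hc
  linear_combination (2 * ((2 * k + 2).choose k : ℤ) * (k ! : ℤ) ^ 2) * hS
    - 6 * ((2 * k + 2).choose (k + 1) : ℤ) * (k ! : ℤ) ^ 2 *
        (2 * ((k + 1).choose 2 : ℤ) + (k + 1) * k) * hC
    + 2 * (k : ℤ) * (3 * k + 1) * hX - 6 * (k : ℤ) ^ 2 * hY + 4 * ((2 * k)! : ℤ) * hc

theorem S_eq_at_2k_add_2 (k : ℕ) :
    (∑ i ∈ Finset.range (k+1), ∑ j ∈ Finset.range (k+1),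
      (-1 : ℤ)^(i+j) * (k.choose i) * (k.choose j) * ((i : ℤ) - j)^(2*k+2)) =
    (-1 : ℤ)^k * (Nat.factorial (2*k)) * ((k * (k+1) * (2*k+1)) / 6 : ℕ) := by
  have hvanish : ∀ m < k, alternatingChooseSum k (fun i ↦ (i : ℤ) ^ m) = 0 := fun m hm ↦ by
    rw [alternatingChooseSum_pow, Nat.stirlingSecond_eq_zero_of_lt hm, Nat.cast_zero, mul_zero]
  rw [sum_sum_neg_one_pow_mul_choose_mul_choose_mul_sub_pow, Even.neg_one_pow ⟨k + 1, by ring⟩,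
    one_mul, sum_range_mul_mul_sub_of_eq_zero_of_lt k _ _ hvanish]
  simp only [alternatingChooseSum_pow_mul_alternatingChooseSum_pow, Nat.stirlingSecond_self,
    Nat.stirlingSecond_succ_self_left,
    Nat.choose_symm_of_eq_add (show 2 * k + 2 = (k + 2) + k by ring)]
  linear_combination (-1 : ℤ) ^ k * factorial_sq_mul_stirlingSecond_combination k
end

section
/- Let p \geq 5 be a prime. Then there exists an element m of the field \mathbb{F}_{p^2} such that m is not a square in \mathbb{F}_{p^2} and the norm of 1+m over \mathbb{F}_p equals 4, i.e. (1+m)^{p+1} = 4. -/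
/-!
Pick `t ∈ 𝔽_p` with `t ^ 2 - 16` and `5 - t` both nonsquares. Then `X ^ 2 - t X + 4` has a root
`u ∈ 𝔽_{p²} \ 𝔽_p` whose conjugate is `u ^ p`, so `u` has norm `4` and trace `t`, and `m = u - 1`
has norm `4 - t + 1 = 5 - t`. A nonzero element of `𝔽_{p²}` is a square iff its norm is a square
in `𝔽_p` (Euler's criterion, as `(p ^ 2 - 1) / 2 = (p + 1) (p - 1) / 2`), so `m` is not a square.

Such a `t` exists by counting: `w ↦ 4 (w + 1) / (w - 1)` maps the nonsquares injectively to the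
`t` with `t ^ 2 - 16` nonsquare, so there are at least `(p - 1) / 2` of those; if `5 - t` were a
square for each of them, `t ↦ 5 - t` would map them injectively to the `(p - 1) / 2 - 1` nonzero
squares other than `1`.
-/

open Finset

theorem isSquare_mul_sq_iff {K : Type*} [Field K] {a b : K} (hb : b ≠ 0) :
    IsSquare (a * b ^ 2) ↔ IsSquare a := by
  refine ⟨fun ⟨r, hr⟩ => ⟨r / b, ?_⟩, fun ha => ha.mul (IsSquare.sq b)⟩
  rw [div_mul_div_comm, ← hr]
  field_simp

namespace FiniteField

section OddCharacteristic

open scoped Classical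

variable {K : Type*} [Field K] [Fintype K] (hK : ringChar K ≠ 2)
include hK

theorem card_filter_isSquare_ne_zero_le :
    #{x : K | IsSquare x ∧ x ≠ 0} ≤ #{x : K | ¬IsSquare x} := by
  obtain ⟨c, hc⟩ := exists_nonsquare hK
  have hc0 : c ≠ 0 := fun h => hc (h ▸ IsSquare.zero)
  refine card_le_card_of_injOn (c * ·) (fun x hx => ?_) fun x _ y _ h => mul_left_cancel₀ hc0 h
  simp only [coe_filter, mem_univ, true_and, Set.mem_ofPred_eq] at hx ⊢
  rw [← quadraticChar_neg_one_iff_not_isSquare, map_mul,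
    quadraticChar_neg_one_iff_not_isSquare.mpr hc, (quadraticChar_one_iff_isSquare hx.2).mpr hx.1,
    mul_one]

theorem card_filter_not_isSquare_le :
    #{w : K | ¬IsSquare w} ≤ #{t : K | ¬IsSquare (t ^ 2 - 16)} := by
  have h8 : (8 : K) ≠ 0 := by
    rw [show (8 : K) = 2 ^ 3 by norm_num]
    exact pow_ne_zero 3 (Ring.two_ne_zero hK)
  have sub_one_ne_zero : ∀ w : K, ¬IsSquare w → w - 1 ≠ 0 := fun w hw h =>
    hw (sub_eq_zero.mp h ▸ IsSquare.one)
  refine card_le_card_of_injOn (fun w => 4 * (w + 1) / (w - 1)) (fun w hw => ?_)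
    fun a ha b hb h => ?_
  · simp only [coe_filter, mem_univ, true_and, Set.mem_ofPred_eq] at hw ⊢
    have hw1 := sub_one_ne_zero w hw
    have hsq_sub : (4 * (w + 1) / (w - 1)) ^ 2 - 16 = w * (8 / (w - 1)) ^ 2 := by
      field_simp
      ring
    rwa [hsq_sub, isSquare_mul_sq_iff (div_ne_zero h8 hw1)]
  · simp only [coe_filter, mem_univ, true_and, Set.mem_ofPred_eq] at ha hb
    have ha1 := sub_one_ne_zero a ha
    have hb1 := sub_one_ne_zero b hb
    field_simp at h
    have : 8 * (a - b) = 0 := by linear_combination -h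
    exact sub_eq_zero.mp ((mul_eq_zero.mp this).resolve_left h8)

theorem exists_not_isSquare_sq_sub_sixteen_and_not_isSquare_five_sub :
    ∃ t : K, ¬IsSquare (t ^ 2 - 16) ∧ ¬IsSquare (5 - t) := by
  by_contra! h
  have hA : #{t : K | ¬IsSquare (t ^ 2 - 16)} ≤
      #(({x : K | IsSquare x ∧ x ≠ 0} : Finset K).erase 1) := by
    refine card_le_card_of_injOn (5 - ·) (fun t ht => ?_) fun a _ b _ hab => sub_right_injective hab
    simp only [coe_filter, mem_univ, true_and, Set.mem_ofPred_eq, coe_erase, Set.mem_sdiff,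
      Set.mem_singleton_iff] at ht ⊢
    refine ⟨⟨h t ht, fun h5 => ht ?_⟩, fun h4 => ht ?_⟩
    · exact ⟨3, by rw [← sub_eq_zero.mp h5]; ring⟩
    · rw [show t = 4 by linear_combination -h4]
      exact ⟨0, by ring⟩
  have one_mem : (1 : K) ∈ ({x : K | IsSquare x ∧ x ≠ 0} : Finset K) := by simp
  have := card_erase_of_mem one_mem
  have := card_filter_not_isSquare_le hK
  have := card_filter_isSquare_ne_zero_le hK
  have := card_pos.mpr ⟨1, one_mem⟩
  omega

end OddCharacteristic

section CharP

variable {p : ℕ} [Fact p.Prime] {F : Type*} [Field F] [CharP F p]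

theorem castHom_pow_char (c : ZMod p) :
    ZMod.castHom dvd_rfl F c ^ p = ZMod.castHom dvd_rfl F c := by
  rw [← map_pow, ZMod.pow_card]

theorem pow_char_eq_self_iff {x : F} : x ^ p = x ↔ ∃ c : ZMod p, ZMod.castHom dvd_rfl F c = x := by
  rw [← Subfield.mem_bot_iff_pow_eq_self F p, ← ZMod.fieldRange_castHom_eq_bot p]
  rfl

theorem pow_char_eq_neg_of_sq_eq {δ : F} {d : ZMod p} (hd : ¬IsSquare d)
    (hδ : δ ^ 2 = ZMod.castHom dvd_rfl F d) : δ ^ p = -δ := by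
  have hsq : (δ ^ p) ^ 2 = δ ^ 2 := by rw [← pow_right_comm, hδ, castHom_pow_char]
  refine (sq_eq_sq_iff_eq_or_eq_neg.mp hsq).resolve_left fun hfix => hd ?_
  obtain ⟨e, rfl⟩ := pow_char_eq_self_iff.mp hfix
  refine ⟨e, (ZMod.castHom dvd_rfl F).injective ?_⟩
  rw [map_mul, ← hδ, sq]

end CharP

theorem sub_one_pow_char_add_one {p : ℕ} [Fact p.Prime] {R : Type*} [CommRing R] [CharP R p]
    (x : R) : (x - 1) ^ (p + 1) = x ^ (p + 1) - (x + x ^ p) + 1 := by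
  rw [pow_succ, sub_pow_char, one_pow, pow_succ]
  ring

section QuadraticExtension

variable {p : ℕ} [Fact p.Prime] {F : Type*} [Field F] [Fintype F] [CharP F p]
  (hF : Fintype.card F = p ^ 2) (hp2 : p ≠ 2)
include hF hp2

theorem isSquare_iff_isSquare_of_pow_char_add_one_eq {x : F} {c : ZMod p} (hc : c ≠ 0)
    (hx : x ^ (p + 1) = ZMod.castHom dvd_rfl F c) : IsSquare x ↔ IsSquare c := by
  have hx0 : x ≠ 0 := by
    rintro rfl
    exact hc ((ZMod.castHom dvd_rfl F).injective (by rw [← hx, map_zero, zero_pow p.succ_ne_zero]))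
  have hexp : p ^ 2 / 2 = (p + 1) * (p / 2) := by
    obtain ⟨k, rfl⟩ := (Fact.out : p.Prime).odd_of_ne_two hp2
    rw [show (2 * k + 1) / 2 = k by omega]
    rw [show (2 * k + 1) ^ 2 = 2 * ((2 * k + 1 + 1) * k) + 1 by ring]
    omega
  rw [isSquare_iff (by rwa [ringChar.eq F p]) hx0, isSquare_iff (by rwa [ZMod.ringChar_zmod_n]) hc,
    hF, ZMod.card, hexp, pow_mul, hx, ← map_pow,
    map_eq_one_iff _ (ZMod.castHom dvd_rfl F).injective]

theorem isSquare_castHom (c : ZMod p) : IsSquare (ZMod.castHom dvd_rfl F c) := by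
  rcases eq_or_ne c 0 with rfl | hc
  · simp
  rw [isSquare_iff_isSquare_of_pow_char_add_one_eq hF hp2 (pow_ne_zero 2 hc)]
  · exact IsSquare.sq c
  · rw [pow_succ, castHom_pow_char, map_pow, sq]

theorem exists_pow_char_add_one_eq_and_add_pow_char_eq {s t : ZMod p}
    (h : ¬IsSquare (t ^ 2 - 4 * s)) :
    ∃ u : F, u ^ (p + 1) = ZMod.castHom dvd_rfl F s ∧ u + u ^ p = ZMod.castHom dvd_rfl F t := by
  obtain ⟨δ, hδ⟩ := isSquare_castHom hF hp2 (t ^ 2 - 4 * s)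
  set φ := ZMod.castHom dvd_rfl F
  have hδp := pow_char_eq_neg_of_sq_eq h (sq δ ▸ hδ.symm)
  replace hδ : δ ^ 2 = φ t ^ 2 - 4 * φ s := by
    rw [sq, ← hδ, map_sub, map_mul, map_pow, map_ofNat]
  have h2 : (2 : F) ≠ 0 := Ring.two_ne_zero (by rwa [ringChar.eq F p])
  have hup : ((φ t + δ) / 2) ^ p = (φ t - δ) / 2 := by
    rw [div_pow, add_pow_char, castHom_pow_char, hδp, ← map_ofNat φ 2, castHom_pow_char,
      sub_eq_add_neg]
  -- `(t ± δ) / 2` are the two roots of `X ^ 2 - t X + s`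
  refine ⟨(φ t + δ) / 2, ?_, ?_⟩
  · rw [pow_succ, hup]
    field_simp
    linear_combination -hδ
  · rw [hup]
    field_simp
    ring

end QuadraticExtension

end FiniteField

open FiniteField in
theorem exists_nonsquare_norm_four (p : ℕ) (hp : p.Prime) (hp5 : 5 ≤ p)
    (F : Type) [Field F] [Fintype F] (hF : Fintype.card F = p^2) :
    ∃ m : F, ¬ (∃ y : F, y^2 = m) ∧ (1 + m)^(p+1) = 4 := by
  have := Fact.mk hp
  have := charP_of_card_eq_prime_pow hF
  have hp2 : p ≠ 2 := by omega
  obtain ⟨t, ht, h5t⟩ :=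
    exists_not_isSquare_sq_sub_sixteen_and_not_isSquare_five_sub (K := ZMod p)
      (by rwa [ZMod.ringChar_zmod_n])
  obtain ⟨u, hnorm, htrace⟩ := exists_pow_char_add_one_eq_and_add_pow_char_eq hF hp2 (s := 4)
    (by rwa [show t ^ 2 - 4 * 4 = t ^ 2 - 16 by norm_num])
  have hnorm_sub_one : (u - 1) ^ (p + 1) = ZMod.castHom dvd_rfl F (5 - t) := by
    rw [sub_one_pow_char_add_one, hnorm, htrace, map_sub, map_ofNat, map_ofNat]
    ring
  have h5t0 : 5 - t ≠ 0 := fun h => h5t (h ▸ IsSquare.zero)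
  refine ⟨u - 1, fun ⟨y, hy⟩ => h5t ?_, ?_⟩
  · rw [← isSquare_iff_isSquare_of_pow_char_add_one_eq hF hp2 h5t0 hnorm_sub_one]
    exact ⟨y, by rw [← hy, sq]⟩
  · rw [add_sub_cancel, hnorm, map_ofNat]
end

section
/- Let p \geq 5 be a prime. Then there exists a non-square k in \mathbb{F}_p (k is not a square in \mathbb{F}_p) such that k^2 - 10k + 9 is also not a square in \mathbb{F}_p. -/
/-!
Let `χ` be the quadratic character. If every nonsquare `k` made `(k - 1)(k - 9)` a square, then,
since `1` and `9` are squares, `χ k + χ ((k - 1)(k - 9)) ≥ 0` for every `k`. But summing over `k`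
gives `0 + (-1)`: the character sum of a quadratic with distinct roots is `χ (-1)` times the
Jacobi sum `J(χ, χ) = -χ (-1)`.
-/

open Finset

section QuadraticChar

variable {F : Type*} [Field F] [Fintype F] [DecidableEq F]

theorem sum_quadraticChar_mul_sub_mul_sub (hF : ringChar F ≠ 2) {a b : F} (hab : a ≠ b) :
    ∑ x, quadraticChar F ((x - a) * (x - b)) = -1 := by
  have hc : b - a ≠ 0 := sub_ne_zero.mpr hab.symm
  have hJ : jacobiSum (quadraticChar F) (quadraticChar F) = -quadraticChar F (-1) := by
    simpa only [(quadraticChar_isQuadratic F).inv] using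
      jacobiSum_nontrivial_inv (quadraticChar_ne_one hF)
  have hsubst (u : F) :
      (a + (b - a) * u - a) * (a + (b - a) * u - b) = -1 * ((b - a) ^ 2 * (u * (1 - u))) := by
    ring
  calc ∑ x, quadraticChar F ((x - a) * (x - b))
      = ∑ u, quadraticChar F (-1 * ((b - a) ^ 2 * (u * (1 - u)))) :=
        (Fintype.sum_equiv ((Equiv.mulLeft₀ _ hc).trans (Equiv.addLeft a)) _ _ fun u => by
          simp only [Equiv.trans_apply, Equiv.mulLeft₀_apply, Equiv.coe_addLeft, hsubst]).symm
    _ = quadraticChar F (-1) * jacobiSum (quadraticChar F) (quadraticChar F) := by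
        simp only [jacobiSum, mul_sum, map_mul, quadraticChar_sq_one' hc, one_mul]
    _ = -1 := by
        rw [hJ, mul_neg, ← sq, quadraticChar_sq_one (neg_ne_zero.mpr one_ne_zero)]

theorem quadraticChar_nonneg_of_isSquare {x : F} (hx : IsSquare x) : 0 ≤ quadraticChar F x := by
  rcases eq_or_ne x 0 with rfl | hx0
  · simp
  · simp [(quadraticChar_one_iff_isSquare hx0).mpr hx]

theorem neg_one_le_quadraticChar (x : F) : -1 ≤ quadraticChar F x := by
  rcases eq_or_ne x 0 with rfl | hx0
  · simp
  · rcases quadraticChar_dichotomy hx0 with h | h <;> simp [h]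

theorem exists_not_isSquare_and_not_isSquare_mul_sub_mul_sub (hF : ringChar F ≠ 2) {a b : F}
    (hab : a ≠ b) (ha : IsSquare a) (hb : IsSquare b) :
    ∃ k, ¬IsSquare k ∧ ¬IsSquare ((k - a) * (k - b)) := by
  by_contra! h
  have hterm (k : F) : 0 ≤ quadraticChar F k + quadraticChar F ((k - a) * (k - b)) := by
    by_cases hk : IsSquare k
    · rcases eq_or_ne k 0 with rfl | hk0
      · have hab' : IsSquare ((0 - a) * (0 - b)) := by simpa using ha.mul hb
        simpa using quadraticChar_nonneg_of_isSquare hab'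
      · rw [(quadraticChar_one_iff_isSquare hk0).mpr hk]
        linarith [neg_one_le_quadraticChar ((k - a) * (k - b))]
    · have hka : k - a ≠ 0 := sub_ne_zero.mpr fun h => hk (h ▸ ha)
      have hkb : k - b ≠ 0 := sub_ne_zero.mpr fun h => hk (h ▸ hb)
      rw [quadraticChar_neg_one_iff_not_isSquare.mpr hk,
        (quadraticChar_one_iff_isSquare (mul_ne_zero hka hkb)).mpr (h k hk)]
      norm_num
  have hsum := sum_nonneg fun k (_ : k ∈ univ) => hterm k
  rw [sum_add_distrib, quadraticChar_sum_zero hF, sum_quadraticChar_mul_sub_mul_sub hF hab] at hsum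
  norm_num at hsum

end QuadraticChar

theorem exists_nonsquare_k (p : ℕ) (hp : p.Prime) (hp5 : 5 ≤ p) :
    ∃ k : ZMod p, ¬ (∃ b : ZMod p, b^2 = k) ∧
      ¬ (∃ b : ZMod p, b^2 = k^2 - 10*k + 9) := by
  have := Fact.mk hp
  have hchar : ringChar (ZMod p) ≠ 2 := by
    rw [ZMod.ringChar_zmod_n]; omega
  have h19 : (1 : ZMod p) ≠ 9 := by
    intro h
    have h8 : ((2 ^ 3 : ℕ) : ZMod p) = 0 := by push_cast; linear_combination -h
    have := Nat.le_of_dvd two_pos (hp.dvd_of_dvd_pow ((ZMod.natCast_eq_zero_iff _ _).mp h8))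
    omega
  obtain ⟨k, hk, hfk⟩ := exists_not_isSquare_and_not_isSquare_mul_sub_mul_sub hchar h19
    IsSquare.one ⟨3, by norm_num⟩
  refine ⟨k, fun ⟨b, hb⟩ => hk ⟨b, by rw [← hb, sq]⟩, fun ⟨b, hb⟩ => hfk ⟨b, ?_⟩⟩
  rw [← sq, hb]; ring
end

section
/- Let p \geq 5 be a prime with p \equiv 1 \pmod{3}. Then the equation u^{p-1} + y^{p-1} + 1 = 0 has no solution with u, y \in \mathbb{F}_{p^2}^*. -/
/-!
Put `a = u^(p-1)` and `b = y^(p-1)`. As `F^*` has order `p^2 - 1`, both satisfy `x^(p+1) = 1`,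
so Frobenius maps them to their inverses and turns `a + b + 1 = 0` into `a⁻¹ + b⁻¹ + 1 = 0`.
Together these force `a^2 + a + 1 = 0`, so `a^3 = 1`; since `p + 1 ≡ 2 (mod 3)` also `a^2 = 1`,
hence `a = 1` and `3 = 0` in `F`, which is impossible in characteristic `p ≠ 3`.
-/

theorem FiniteField.pow_sub_one_pow_add_one_eq_one {F : Type*} [Field F] [Fintype F] {q : ℕ}
    (hF : Fintype.card F = q ^ 2) {u : F} (hu : u ≠ 0) : (u ^ (q - 1)) ^ (q + 1) = 1 := by
  have hexp : (q - 1) * (q + 1) = Fintype.card F - 1 := by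
    rw [hF, mul_comm, ← Nat.sq_sub_sq, one_pow]
  rw [← pow_mul, hexp, pow_card_sub_one_eq_one u hu]

theorem sq_add_self_add_one_eq_zero_of_pow_succ_eq_one {K : Type*} [Field K] {p : ℕ}
    [Fact p.Prime] [CharP K p] {a b : K} (ha : a ^ (p + 1) = 1) (hb : b ^ (p + 1) = 1)
    (hab : a + b + 1 = 0) : a ^ 2 + a + 1 = 0 := by
  have hab_frob : a ^ p + b ^ p + 1 = 0 := by
    simpa only [map_add, map_one, map_zero, frobenius_def] using congrArg (frobenius K p) hab
  have hab_inv : a * b + a + b = 0 := by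
    linear_combination a * b * hab_frob - b * ha - a * hb
  linear_combination -hab_inv + (a + 1) * hab

theorem three_eq_zero_of_sq_add_self_add_one_eq_zero {R : Type*} [CommRing R] {a : R}
    (ha : a ^ 2 + a + 1 = 0) {n : ℕ} (hn : n % 3 = 2) (han : a ^ n = 1) : (3 : R) = 0 := by
  have hcube : a ^ 3 = 1 := by linear_combination (a - 1) * ha
  have hsq : a ^ 2 = 1 := by
    rwa [← Nat.div_add_mod n 3, hn, pow_add, pow_mul, hcube, one_pow, one_mul] at han
  linear_combination ha + (a - 1) * hsq - hcube

theorem no_solution_p_one_mod_three_general (p : ℕ) (hp : p.Prime) (h3 : p % 3 = 1)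
    (F : Type) [Field F] [Fintype F] (hF : Fintype.card F = p^2) :
    ¬ ∃ u y : F, u ≠ 0 ∧ y ≠ 0 ∧ u^(p-1) + y^(p-1) + 1 = 0 := by
  rintro ⟨u, y, hu, hy, hsum⟩
  have : Fact p.Prime := ⟨hp⟩
  have : CharP F p := charP_of_card_eq_prime_pow hF
  have hu1 := FiniteField.pow_sub_one_pow_add_one_eq_one hF hu
  have hy1 := FiniteField.pow_sub_one_pow_add_one_eq_one hF hy
  have hcyc := sq_add_self_add_one_eq_zero_of_pow_succ_eq_one hu1 hy1 hsum
  have h3F := three_eq_zero_of_sq_add_self_add_one_eq_zero hcyc (by omega) hu1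
  have hp3 : p = 3 := (Nat.prime_dvd_prime_iff_eq hp Nat.prime_three).mp <|
    (CharP.cast_eq_zero_iff F p 3).mp (mod_cast h3F)
  omega

theorem no_solution_p_one_mod_three (p : ℕ) (hp : p.Prime) (hp5 : 5 ≤ p) (h3 : p % 3 = 1)
    (F : Type) [Field F] [Fintype F] (hF : Fintype.card F = p^2) :
    ¬ ∃ u y : F, u ≠ 0 ∧ y ≠ 0 ∧ u^(p-1) + y^(p-1) + 1 = 0 :=
  no_solution_p_one_mod_three_general p hp h3 F hF
end

section
/- Let p \geq 7 be a prime. The equation y^{p-1} + z^{p-1} + t^{p-1} = 0 has a solution with y, z, t \in \mathbb{F}_{p^4}^*. -/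
/-!
The nonzero `(p - 1)`-th powers of `𝔽_{p⁴}` are exactly the elements `a` of norm one over `𝔽_p`,
i.e. with `a ^ ((p² + 1)(p + 1)) = 1`, so it suffices to write `-1 = x + x'` with `x, x'` of
norm one. A counting argument gives `s ∈ 𝔽_p` with `s² - 4` and `17 - 4s` both nonsquares. Then
`X² - sX + 1` has a root `n ∈ 𝔽_{p²}` of norm `n·nᵖ = 1`, and `X² + X + n` is irreducible over
`𝔽_{p²}`, since the norm of its discriminant `1 - 4n` is `17 - 4s`. Its roots `x` and `x' = x^{p²}`
sum to `-1` and have norm `(x·x')^{p+1} = n^{p+1} = 1`.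
-/

open Finset

theorem Finset.two_mul_card_image_le {α β : Type*} [DecidableEq α] [DecidableEq β]
    {s : Finset α} (f : α → β) (ι : α → α) (hι : ∀ a ∈ s, ι a ∈ s)
    (hf : ∀ a ∈ s, f (ι a) = f a) :
    2 * #(s.image f) ≤ #s + #{a ∈ s | ι a = a} := by
  set t := {a ∈ s | ι a = a}
  calc 2 * #(s.image f) = ∑ _b ∈ s.image f, 2 := by simp [mul_comm]
    _ ≤ ∑ b ∈ s.image f, (#{a ∈ s | f a = b} + #{a ∈ t | f a = b}) := sum_le_sum fun b hb => ?_
    _ = #s + #t := by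
      rw [sum_add_distrib, ← card_eq_sum_card_fiberwise fun a ha => mem_image_of_mem f ha,
        ← card_eq_sum_card_fiberwise fun a ha => mem_image_of_mem f (mem_filter.1 ha).1]
  obtain ⟨a, ha, rfl⟩ := mem_image.1 hb
  by_cases hfix : ι a = a
  · have hs : 1 ≤ #{x ∈ s | f x = f a} := card_pos.2 ⟨a, by simp [ha]⟩
    have ht : 1 ≤ #{x ∈ t | f x = f a} := card_pos.2 ⟨a, by simp [t, ha, hfix]⟩
    omega
  · have : 2 ≤ #{x ∈ s | f x = f a} := by
      rw [← card_pair hfix]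
      refine card_le_card fun x hx => ?_
      rcases mem_insert.1 hx with rfl | hx
      · simp [hι _ ha, hf _ ha]
      · simp [mem_singleton.1 hx, ha]
    omega

section CountingSquares

variable {K : Type*} [Field K] [Fintype K]

open scoped Classical in
theorem two_mul_card_filter_isSquare_sq_sub_four_le (hK : ringChar K ≠ 2) :
    2 * #{s : K | IsSquare (s ^ 2 - 4)} ≤ Fintype.card K + 1 := by
  have h2 : (2 : K) ≠ 0 := Ring.two_ne_zero hK
  have hsub : ({s | IsSquare (s ^ 2 - 4)} : Finset K) ⊆ (univ.erase 0).image fun u => u + u⁻¹ := by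
    intro s hs
    obtain ⟨d, hd⟩ := (mem_filter.1 hs).2
    have hu : (s + d) / 2 * ((s - d) / 2) = 1 := by
      field_simp
      linear_combination hd
    refine mem_image.2 ⟨(s + d) / 2, mem_erase.2 ⟨left_ne_zero_of_mul_eq_one hu, mem_univ _⟩, ?_⟩
    rw [inv_eq_of_mul_eq_one_right hu]
    field_simp
    ring
  have hfix : #{u ∈ univ.erase (0 : K) | u⁻¹ = u} ≤ 2 := by
    refine (card_le_card fun u hu => ?_).trans (card_le_two (a := (1 : K)) (b := -1))
    obtain ⟨hu0, hu⟩ := mem_filter.1 hu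
    have : u * u = 1 := by
      nth_rewrite 1 [← hu]
      exact inv_mul_cancel₀ (ne_of_mem_erase hu0)
    simpa using mul_self_eq_one_iff.1 this
  have hcount := two_mul_card_image_le (fun u : K => u + u⁻¹) (·⁻¹)
    (fun u hu => mem_erase.2 ⟨inv_ne_zero (ne_of_mem_erase hu), mem_univ _⟩)
    (fun u _ => by rw [inv_inv, add_comm])
  rw [card_erase_of_mem (mem_univ _), card_univ] at hcount
  have := card_le_card hsub
  have := Fintype.card_pos (α := K)
  omega

open scoped Classical in
theorem two_mul_card_filter_isSquare_sub_four_mul_le (hK : ringChar K ≠ 2) (c : K) :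
    2 * #{s : K | IsSquare (c - 4 * s)} ≤ Fintype.card K + 1 := by
  have h2 : (2 : K) ≠ 0 := Ring.two_ne_zero hK
  have h4 : (4 : K) ≠ 0 := by
    rw [show (4 : K) = 2 * 2 by norm_num]
    exact mul_ne_zero h2 h2
  have hsub : ({s | IsSquare (c - 4 * s)} : Finset K) ⊆ univ.image fun r => (c - r * r) / 4 := by
    intro s hs
    obtain ⟨r, hr⟩ := (mem_filter.1 hs).2
    refine mem_image.2 ⟨r, mem_univ _, ?_⟩
    rw [← hr]
    field_simp
    ring
  have hfix : #{r ∈ (univ : Finset K) | -r = r} ≤ 1 := by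
    refine (card_le_card fun r hr => ?_).trans (card_singleton (0 : K)).le
    have : 2 * r = 0 := by linear_combination -(mem_filter.1 hr).2
    simpa [h2] using this
  have hcount := two_mul_card_image_le (s := univ) (fun r : K => (c - r * r) / 4) (- ·)
    (fun _ _ => mem_univ _) (fun r _ => by ring)
  rw [card_univ] at hcount
  have := card_le_card hsub
  omega

theorem exists_not_isSquare_sq_sub_four_and_not_isSquare_seventeen_sub_four_mul
    (hK : ringChar K ≠ 2) : ∃ s : K, ¬IsSquare (s ^ 2 - 4) ∧ ¬IsSquare (17 - 4 * s) := by
  classical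
  by_contra! hcover
  have hA := two_mul_card_filter_isSquare_sq_sub_four_le hK
  have hB := two_mul_card_filter_isSquare_sub_four_mul_le hK 17
  set A : Finset K := {s | IsSquare (s ^ 2 - 4)}
  set B : Finset K := {s | IsSquare (17 - 4 * s)}
  have hunion : A ∪ B = univ := eq_univ_of_forall fun s => by
    by_cases hs : IsSquare (s ^ 2 - 4) <;> simp [A, B, hs, hcover]
  -- `±2` lie in both sets, so these two sets of size at most `(q + 1) / 2` cannot cover `K`.
  have hinter : {2, -2} ⊆ A ∩ B := by
    intro s hs
    rcases mem_insert.1 hs with rfl | hs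
    · simpa [A, B] using ⟨⟨0, by ring⟩, ⟨3, by norm_num⟩⟩
    · rw [mem_singleton.1 hs]
      simpa [A, B] using ⟨⟨0, by ring⟩, ⟨5, by norm_num⟩⟩
  have h2 : (2 : K) ≠ -2 := fun h =>
    Ring.two_ne_zero hK (mul_self_eq_zero.1 (by linear_combination h))
  have := card_le_card hinter
  rw [card_pair h2] at this
  have := card_union_add_card_inter A B
  rw [hunion, card_univ] at this
  omega

end CountingSquares

theorem IsCyclic.exists_pow_eq_of_pow_eq_one {G : Type*} [Group G] [IsCyclic G] [Finite G]
    {m k : ℕ} (hmk : m * k = Nat.card G) {g : G} (hg : g ^ k = 1) : ∃ y : G, y ^ m = g := by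
  obtain ⟨γ, hγ⟩ := IsCyclic.exists_generator (α := G)
  obtain ⟨j, rfl⟩ : g ∈ Submonoid.powers γ := mem_powers_iff_mem_zpowers.2 (hγ g)
  have hk : 0 < k := Nat.pos_of_ne_zero fun h => Nat.card_pos.ne' (by simpa [h] using hmk.symm)
  have hdvd : m * k ∣ j * k := by
    rw [hmk, ← orderOf_eq_card_of_forall_mem_zpowers hγ]
    exact orderOf_dvd_of_pow_eq_one (by rw [pow_mul, hg])
  obtain ⟨i, rfl⟩ := Nat.dvd_of_mul_dvd_mul_right hk hdvd
  exact ⟨γ ^ i, by rw [← pow_mul, mul_comm]⟩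

section FiniteField

variable {F : Type*} [Field F] [Fintype F]

theorem FiniteField.exists_pow_eq_of_pow_eq_one {m k : ℕ} (hmk : m * k = Fintype.card F - 1)
    {a : F} (ha : a ^ k = 1) : ∃ y : F, y ≠ 0 ∧ y ^ m = a := by
  have hk : k ≠ 0 := by
    rintro rfl
    have := Fintype.one_lt_card (α := F)
    omega
  have ha0 : a ≠ 0 := fun h => by simp [h, hk] at ha
  obtain ⟨y, hy⟩ := IsCyclic.exists_pow_eq_of_pow_eq_one (g := Units.mk0 a ha0)
    (by rw [hmk, Nat.card_units, Nat.card_eq_fintype_card]) (Units.ext (by simpa using ha))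
  exact ⟨y, y.ne_zero, by simpa using congrArg Units.val hy⟩

theorem FiniteField.isSquare_of_pow_eq_self {q : ℕ} (hF : Fintype.card F = q ^ 2) (hq : Odd q)
    {a : F} (ha : a ^ q = a) : IsSquare a := by
  rcases eq_or_ne a 0 with rfl | ha0
  · exact IsSquare.zero
  have hchar : ringChar F ≠ 2 := by
    rw [Ne, FiniteField.even_card_iff_char_two, hF, ← Nat.even_iff]
    exact Nat.not_even_iff_odd.2 hq.pow
  obtain ⟨m, rfl⟩ := hq
  have hexp : (2 * m + 1) ^ 2 / 2 = 2 * m * (m + 1) := by ring_nf; omega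
  have hpow : a ^ (2 * m) = 1 := by simpa [pow_succ, ha0] using ha
  rw [FiniteField.isSquare_iff hchar ha0, hF, hexp, pow_mul, hpow, one_pow]

end FiniteField

theorem exists_add_map_eq_and_mul_map_eq {K : Type*} [Field K] (σ : K →+* K) (h2 : (2 : K) ≠ 0)
    {b c d : K} (hb : σ b = b) (hd : d * d = b ^ 2 - 4 * c) (hσd : σ d = -d) :
    ∃ x : K, x + σ x = b ∧ x * σ x = c := by
  have hσx : σ ((b + d) / 2) = (b - d) / 2 := by
    rw [map_div₀, map_add, hb, hσd, map_ofNat, sub_eq_add_neg]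
  refine ⟨(b + d) / 2, ?_, ?_⟩ <;> rw [hσx] <;> field_simp
  · ring
  · linear_combination -hd

section CharP

variable {F : Type*} [Field F] (p : ℕ) [Fact p.Prime] [CharP F p]

theorem exists_add_pow_eq_and_mul_pow_eq (hp : p ≠ 2) (k : ℕ) {b c : F} (hb : b ^ p ^ k = b)
    (hsq : IsSquare (b ^ 2 - 4 * c)) (hD : (b ^ 2 - 4 * c) ^ (p ^ k / 2) = -1) :
    ∃ x : F, x + x ^ p ^ k = b ∧ x * x ^ p ^ k = c := by
  obtain ⟨d, hd⟩ := hsq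
  have hodd : p ^ k = 2 * (p ^ k / 2) + 1 := by
    have := Nat.odd_iff.1 (((Fact.out : p.Prime).odd_of_ne_two hp).pow : Odd (p ^ k))
    omega
  have hσd : d ^ p ^ k = -d := by rw [hodd, pow_succ, pow_mul, sq, ← hd, hD, neg_one_mul]
  have h2 : (2 : F) ≠ 0 := Ring.two_ne_zero (by rwa [ringChar.eq F p])
  simpa only [iterateFrobenius_def] using exists_add_map_eq_and_mul_map_eq
    (iterateFrobenius F p k) h2 (by rwa [iterateFrobenius_def]) hd.symm
    (by rwa [iterateFrobenius_def])

theorem exists_pow_char_eq_self_and_pow_div_two_eq_neg_one (hp : p ≠ 2) :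
    ∃ S : F, S ^ p = S ∧ (S ^ 2 - 4) ^ (p / 2) = -1 ∧ (17 - 4 * S) ^ (p / 2) = -1 := by
  obtain ⟨s, hs₁, hs₂⟩ :=
    exists_not_isSquare_sq_sub_four_and_not_isSquare_seventeen_sub_four_mul (K := ZMod p)
      (by rwa [ZMod.ringChar_zmod_n])
  let φ := ZMod.castHom (dvd_refl p) F
  have euler : ∀ a : ZMod p, ¬IsSquare a → φ a ^ (p / 2) = -1 := by
    intro a ha
    have ha0 : a ≠ 0 := by
      rintro rfl
      exact ha IsSquare.zero
    rw [← map_pow, (ZMod.pow_div_two_eq_neg_one_or_one p ha0).resolve_left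
      (mt (ZMod.euler_criterion p ha0).2 ha), map_neg, map_one]
  exact ⟨φ s, by rw [← map_pow, ZMod.pow_card], by simpa [map_ofNat] using euler _ hs₁,
    by simpa [map_ofNat] using euler _ hs₂⟩

variable [Fintype F]

theorem exists_add_pow_eq_and_mul_pow_eq_one (hp : p ≠ 2) (hF : Fintype.card F = p ^ 4) {S : F}
    (hS : S ^ p = S) (hS₁ : (S ^ 2 - 4) ^ (p / 2) = -1) :
    ∃ n : F, n + n ^ p = S ∧ n * n ^ p = 1 := by
  have hD : (S ^ 2 - 4 * 1) ^ p ^ 2 = S ^ 2 - 4 * 1 := by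
    simp only [← iterateFrobenius_def, map_sub, map_mul, map_pow, map_one, map_ofNat]
    rw [iterateFrobenius_def, sq p, pow_mul, hS, hS]
  simpa using exists_add_pow_eq_and_mul_pow_eq p hp 1 (c := 1) (by simpa using hS)
    (FiniteField.isSquare_of_pow_eq_self (hF.trans (by ring))
      ((Fact.out : p.Prime).odd_of_ne_two hp).pow hD)
    (by simpa using hS₁)

theorem exists_add_pow_sq_eq_neg_one_and_mul_pow_sq_eq (hp : p ≠ 2) (hF : Fintype.card F = p ^ 4)
    {S n : F} (hS : S ^ p = S) (hn_add : n + n ^ p = S) (hn_mul : n * n ^ p = 1)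
    (hS₂ : (17 - 4 * S) ^ (p / 2) = -1) :
    ∃ x : F, x + x ^ p ^ 2 = -1 ∧ x * x ^ p ^ 2 = n := by
  have hodd : Odd p := (Fact.out : p.Prime).odd_of_ne_two hp
  have hD_norm : (1 - 4 * n) ^ (p + 1) = 17 - 4 * S := by
    rw [pow_succ']
    simp only [← frobenius_def, map_sub, map_mul, map_one, map_ofNat]
    rw [frobenius_def]
    linear_combination 16 * hn_mul - 4 * hn_add
  have hD_fixed : (1 - 4 * n) ^ p ^ 2 = 1 - 4 * n := by
    have hnp : n ^ p = S - n := by linear_combination hn_add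
    simp only [← iterateFrobenius_def, map_sub, map_mul, map_one, map_ofNat]
    rw [iterateFrobenius_def, sq p, pow_mul, hnp, sub_pow_char, hS, hnp, sub_sub_cancel]
  have hexp : p ^ 2 / 2 = (p + 1) * (p / 2) := by
    obtain ⟨m, rfl⟩ := hodd
    rw [show (2 * m + 1) / 2 = m by omega, show (2 * m + 1) ^ 2 = 2 * ((2 * m + 2) * m) + 1 by ring,
      Nat.mul_add_div two_pos]
    ring
  have hdisc : (-1 : F) ^ 2 - 4 * n = 1 - 4 * n := by ring
  exact exists_add_pow_eq_and_mul_pow_eq p hp 2 (Odd.neg_one_pow hodd.pow)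
    (by rw [hdisc]; exact FiniteField.isSquare_of_pow_eq_self (hF.trans (by ring)) hodd.pow hD_fixed)
    (by rw [hdisc, hexp, pow_mul, hD_norm, hS₂])

theorem exists_add_eq_neg_one_and_pow_eq_one (hp : p ≠ 2) (hF : Fintype.card F = p ^ 4) :
    ∃ a b : F, a + b = -1 ∧ a ^ ((p ^ 2 + 1) * (p + 1)) = 1 ∧ b ^ ((p ^ 2 + 1) * (p + 1)) = 1 := by
  obtain ⟨S, hS, hS₁, hS₂⟩ := exists_pow_char_eq_self_and_pow_div_two_eq_neg_one (F := F) p hp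
  obtain ⟨n, hn_add, hn_mul⟩ := exists_add_pow_eq_and_mul_pow_eq_one p hp hF hS hS₁
  obtain ⟨x, hx_add, hx_mul⟩ :=
    exists_add_pow_sq_eq_neg_one_and_mul_pow_sq_eq p hp hF hS hn_add hn_mul hS₂
  have norm_eq_one : ∀ y : F, y * y ^ p ^ 2 = n → y ^ ((p ^ 2 + 1) * (p + 1)) = 1 := fun y hy => by
    rw [pow_mul, pow_succ' y, hy, pow_succ', hn_mul]
  have hx_frob : (x ^ p ^ 2) ^ p ^ 2 = x := by
    rw [← pow_mul, ← pow_add]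
    exact hF ▸ FiniteField.pow_card x
  refine ⟨x, x ^ p ^ 2, hx_add, norm_eq_one x hx_mul, norm_eq_one _ ?_⟩
  rw [hx_frob, mul_comm, hx_mul]

end CharP

theorem fermat_solution_p4 (p : ℕ) (hp : p.Prime) (hp7 : 7 ≤ p)
    (F : Type) [Field F] [Fintype F] (hF : Fintype.card F = p^4) :
    ∃ y z t : F, y ≠ 0 ∧ z ≠ 0 ∧ t ≠ 0 ∧
      y^(p-1) + z^(p-1) + t^(p-1) = 0 := by
  have := Fact.mk hp
  have := charP_of_card_eq_prime_pow hF
  obtain ⟨a, b, hab, ha, hb⟩ := exists_add_eq_neg_one_and_pow_eq_one p (by omega) hF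
  have hcard : (p - 1) * ((p ^ 2 + 1) * (p + 1)) = Fintype.card F - 1 := by
    rw [hF]
    zify [hp.one_le, Nat.one_le_pow 4 p hp.pos]
    ring
  obtain ⟨z, hz, rfl⟩ := FiniteField.exists_pow_eq_of_pow_eq_one hcard ha
  obtain ⟨t, ht, rfl⟩ := FiniteField.exists_pow_eq_of_pow_eq_one hcard hb
  exact ⟨1, z, t, one_ne_zero, hz, ht, by linear_combination hab⟩
end

section
/- Let p be a prime and a, b, k, l non-negative integers with l \leq k+1 \leq a < p and a + b \equiv k \pmod{p}. Then \binom{a}{k+1-l}\binom{b}{l} \equiv (-1)^l \binom{a}{k+1}\binom{k+1}{l} \pmod{p}. -/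
/-!
Modulo `p` we have `b ≡ -(a - k)`, so upper negation of the falling factorial gives
`l! * C(b, l) ≡ (-1)^l * l! * C(a - k - 1 + l, l)`, and `l!` is invertible because `l < p`.
What remains is the integer identity `C(a, k+1-l) * C(a-k-1+l, l) = C(a, k+1) * C(k+1, l)`.
-/

open Nat Polynomial

theorem descPochhammer_eval_neg {R : Type*} [CommRing R] (r : R) (k : ℕ) :
    (descPochhammer R k).eval (-r) = (-1) ^ k * (ascPochhammer R k).eval r := by
  rw [← neg_neg r, ascPochhammer_eval_neg_eq_descPochhammer, neg_neg, ← mul_assoc, ← mul_pow,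
    neg_one_mul, neg_neg, one_pow, one_mul]

theorem Nat.cast_descFactorial_of_cast_eq_neg {R : Type*} [CommRing R] {n m : ℕ}
    (h : (n : R) = -m) (k : ℕ) :
    (n.descFactorial k : R) = (-1) ^ k * (m + k - 1).descFactorial k := by
  rw [← descPochhammer_eval_eq_descFactorial, h, descPochhammer_eval_neg,
    ascPochhammer_nat_eq_natCast_ascFactorial, add_descFactorial_eq_ascFactorial']

theorem Nat.cast_choose_of_cast_eq_neg {K : Type*} [Field K] {n m k : ℕ} (hk : (k ! : K) ≠ 0)
    (h : (n : K) = -m) :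
    (n.choose k : K) = (-1) ^ k * (m + k - 1).choose k := by
  apply mul_left_cancel₀ hk
  have hdesc := Nat.cast_descFactorial_of_cast_eq_neg h k
  simp only [descFactorial_eq_factorial_mul_choose, Nat.cast_mul] at hdesc
  rw [hdesc]; ring

theorem Nat.choose_mul_choose_add_sub {a k l : ℕ} (hl : l ≤ k) (hka : k ≤ a) :
    a.choose (k - l) * (a - k + l).choose l = a.choose k * k.choose l := by
  rw [← choose_symm hl, choose_mul (sub_le k l), Nat.sub_sub_self hl,
    Nat.sub_sub_right _ hl, Nat.sub_add_comm hka]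

theorem binom_congr (p a b k l : ℕ) (hp : p.Prime)
    (hl : l ≤ k+1) (hka : k+1 ≤ a) (hap : a < p)
    (hab : (a + b : ℤ) ≡ k [ZMOD p]) :
    ((a.choose (k+1-l) * b.choose l : ℕ) : ℤ) ≡
      (-1 : ℤ)^l * (a.choose (k+1)) * ((k+1).choose l) [ZMOD p] := by
  have : Fact p.Prime := ⟨hp⟩
  rw [← ZMod.intCast_eq_intCast_iff] at hab ⊢
  push_cast at hab ⊢
  have hb : (b : ZMod p) = -((a - k : ℕ) : ZMod p) := by
    rw [Nat.cast_sub (by omega)]; linear_combination hab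
  have hfac : (l ! : ZMod p) ≠ 0 := by
    rw [Ne, ZMod.natCast_eq_zero_iff, hp.dvd_factorial]
    omega
  rw [Nat.cast_choose_of_cast_eq_neg hfac hb, show a - k + l - 1 = a - (k + 1) + l by omega,
    mul_left_comm, ← Nat.cast_mul, Nat.choose_mul_choose_add_sub hl hka]
  push_cast; ring
end
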